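/- For ρ_sep = (1/4)·[[1,0,0,0],[0,1,1,0],[0,1,1,0],[0,0,0,1]], every decomposition into pure states of definite total particle number has average entanglement at least 1/2 and average SiV at least 1/2, with equality attained; i.e., E_F^SSR(ρ_sep) = 1/2 and V_F^SSR(ρ_sep) = 1/2. -/

import Mathlib

open Matrix

/-- Outer product `|ψ⟩⟨ψ|`. -/
noncomputable def outer {ι : Type*} (ψ : ι → ℂ) : Matrix ι ι ℂ :=
  Matrix.of fun a b => ψ a * star (ψ b)

/-- Von Neumann entropy (base 2) of a Hermitian matrix, via its eigenvalues. -/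
noncomputable def vnEntropy {ι : Type*} [Fintype ι] [DecidableEq ι]
    (ρ : Matrix ι ι ℂ) : ℝ :=
  if h : ρ.IsHermitian then -∑ i, h.eigenvalues i * Real.logb 2 (h.eigenvalues i)
  else 0

/-- Entropy of entanglement of a bipartite vector: entropy of `tr_B |χ⟩⟨χ|`. -/
noncomputable def entE {A B : Type*} [Fintype A] [Fintype B] [DecidableEq A]
    (χ : A × B → ℂ) : ℝ :=
  vnEntropy (Matrix.of fun a a' => ∑ b, χ (a, b) * star (χ (a', b)))

/-- Superselection induced variance of a normalized two-qubit state,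
`V = 4(⟨N_A²⟩ − ⟨N_A⟩²)` with `N_A` the particle number of the first qubit. -/
noncomputable def siv (ψ : Fin 2 × Fin 2 → ℂ) : ℝ :=
  4 * ((∑ p, ((p.1 : ℕ) : ℝ) ^ 2 * Complex.normSq (ψ p)) -
       (∑ p, ((p.1 : ℕ) : ℝ) * Complex.normSq (ψ p)) ^ 2)

/-- SSR-compatible pure-state decompositions of `ρ`: nonnegative weights and
normalized pure states, each of definite total particle number. -/
def IsSSRDecomp (ρ : Matrix (Fin 2 × Fin 2) (Fin 2 × Fin 2) ℂ)
    {k : ℕ} (q : Fin k → ℝ) (ψ : Fin k → Fin 2 × Fin 2 → ℂ) : Prop :=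
  (∀ i, 0 ≤ q i) ∧ (∀ i, ∑ p, Complex.normSq (ψ i p) = 1) ∧
  (∀ i, ∃ c : ℕ, ∀ p : Fin 2 × Fin 2, (p.1 : ℕ) + (p.2 : ℕ) ≠ c → ψ i p = 0) ∧
  ρ = ∑ i, (q i : ℂ) • outer (ψ i)

/-- The separable-but-nonlocal state `ρ_sep`. -/
noncomputable def rhoSep : Matrix (Fin 2 × Fin 2) (Fin 2 × Fin 2) ℂ :=
  Matrix.of fun p q =>
    if p = q ∧ (p = (0, 0) ∨ p = (1, 1)) then (1 / 4 : ℂ)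
    else if (p = (0, 1) ∨ p = (1, 0)) ∧ (q = (0, 1) ∨ q = (1, 0)) then (1 / 4 : ℂ)
    else 0

/-! The quadratic form of `ρ_sep` vanishes on `|01⟩ - |10⟩`, so in any decomposition
`ρ_sep = ∑ qᵢ |ψᵢ⟩⟨ψᵢ|` every `ψᵢ` with `qᵢ ≠ 0` has equal `|01⟩` and `|10⟩` amplitudes. A state
of definite particle number has a diagonal reduced state, so for a normalized symmetric one both the
entanglement and the SiV equal its one-particle weight `|ψ(01)|² + |ψ(10)|²`, which is `0` or `1`.
These weights average to `ρ_sep(01,01) + ρ_sep(10,10) = 1/2`, so every SSR-compatible decomposition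
gives exactly `1/2` for both quantities. -/

open Polynomial in
lemma vnEntropy_diagonal {ι : Type*} [Fintype ι] [DecidableEq ι] (d : ι → ℝ) :
    vnEntropy (diagonal fun i => (d i : ℂ)) = -∑ i, d i * Real.logb 2 (d i) := by
  have hM : (diagonal fun i => (d i : ℂ)).IsHermitian := by
    simp [Matrix.IsHermitian, diagonal_conjTranspose]
  have hroots : Multiset.map hM.eigenvalues Finset.univ.val = Multiset.map d Finset.univ.val := by
    have h := hM.roots_charpoly_eq_eigenvalues
    rw [charpoly_diagonal, roots_prod _ _ (by simp [Finset.prod_ne_zero_iff, X_sub_C_ne_zero])] at h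
    simpa [Multiset.map_map, Function.comp_def] using congrArg (Multiset.map Complex.re) h.symm
  have := congrArg (fun s => (s.map fun x => x * Real.logb 2 x).sum) hroots
  simp only [Multiset.map_map, Function.comp_def] at this
  rw [vnEntropy, dif_pos hM, Finset.sum_eq_multiset_sum, Finset.sum_eq_multiset_sum, this]

def HasParticleNumber {n m : ℕ} (χ : Fin n × Fin m → ℂ) (c : ℕ) : Prop :=
  ∀ p : Fin n × Fin m, (p.1 : ℕ) + (p.2 : ℕ) ≠ c → χ p = 0

noncomputable def marginal {A B : Type*} [Fintype B] (χ : A × B → ℂ) (a : A) : ℝ :=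
  ∑ b, Complex.normSq (χ (a, b))

lemma reducedState_eq_diagonal {n m c : ℕ} {χ : Fin n × Fin m → ℂ} (hχ : HasParticleNumber χ c) :
    (Matrix.of fun a a' => ∑ b, χ (a, b) * star (χ (a', b))) =
      diagonal fun a => (marginal χ a : ℂ) := by
  ext a a'
  by_cases haa' : a = a'
  · subst haa'
    simp [marginal, Complex.mul_conj]
  · rw [of_apply, diagonal_apply_ne _ haa']
    refine Finset.sum_eq_zero fun b _ => ?_
    by_cases hab : (a : ℕ) + b = c
    · have : (a' : ℕ) + b ≠ c := fun h => haa' (Fin.ext (by omega))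
      simp [hχ (a', b) this]
    · simp [hχ (a, b) hab]

lemma entE_eq_of_hasParticleNumber {n m c : ℕ} {χ : Fin n × Fin m → ℂ}
    (hχ : HasParticleNumber χ c) :
    entE χ = -∑ a, marginal χ a * Real.logb 2 (marginal χ a) := by
  rw [entE, reducedState_eq_diagonal hχ, vnEntropy_diagonal]

lemma siv_eq_marginal (ψ : Fin 2 × Fin 2 → ℂ) : siv ψ = 4 * (marginal ψ 1 - marginal ψ 1 ^ 2) := by
  simp [siv, marginal, Fintype.sum_prod_type]

lemma marginal_zero_add_marginal_one (ψ : Fin 2 × Fin 2 → ℂ) :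
    marginal ψ 0 + marginal ψ 1 = ∑ p, Complex.normSq (ψ p) := by
  simp [marginal, Fintype.sum_prod_type]

noncomputable def oneParticleWeight (ψ : Fin 2 × Fin 2 → ℂ) : ℝ :=
  Complex.normSq (ψ (0, 1)) + Complex.normSq (ψ (1, 0))

lemma marginal_one_cases {ψ : Fin 2 × Fin 2 → ℂ} {c : ℕ} (hnorm : ∑ p, Complex.normSq (ψ p) = 1)
    (hc : HasParticleNumber ψ c) (hsymm : ψ (0, 1) = ψ (1, 0)) :
    (marginal ψ 1 = 0 ∧ oneParticleWeight ψ = 0) ∨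
      (marginal ψ 1 = 1 / 2 ∧ oneParticleWeight ψ = 1) ∨
      (marginal ψ 1 = 1 ∧ oneParticleWeight ψ = 0) := by
  simp only [Fintype.sum_prod_type, Fin.sum_univ_two] at hnorm
  simp only [marginal, oneParticleWeight, Fin.sum_univ_two]
  rcases c with _ | _ | _ | c
  · simp_all [hc (0, 1) (by decide), hc (1, 0) (by decide), hc (1, 1) (by decide)]
  · rw [hc (0, 0) (by decide), hc (1, 1) (by decide), hsymm] at *
    simp only [map_zero] at *
    right; left
    constructor <;> linarith
  · simp_all [hc (0, 0) (by decide), hc (0, 1) (by decide), hc (1, 0) (by decide)]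
  · simp_all [hc (0, 0) (by simp), hc (0, 1) (by simp), hc (1, 0) (by simp), hc (1, 1) (by simp)]

lemma entE_eq_oneParticleWeight {ψ : Fin 2 × Fin 2 → ℂ} {c : ℕ}
    (hnorm : ∑ p, Complex.normSq (ψ p) = 1) (hc : HasParticleNumber ψ c)
    (hsymm : ψ (0, 1) = ψ (1, 0)) : entE ψ = oneParticleWeight ψ := by
  have h0 : marginal ψ 0 = 1 - marginal ψ 1 := by
    linarith [marginal_zero_add_marginal_one ψ]
  have hlog : Real.logb 2 (1 / 2) = -1 := by
    rw [one_div, Real.logb_inv, Real.logb_self_eq_one one_lt_two]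
  rw [entE_eq_of_hasParticleNumber hc, Fin.sum_univ_two, h0]
  rcases marginal_one_cases hnorm hc hsymm with ⟨h1, hw⟩ | ⟨h1, hw⟩ | ⟨h1, hw⟩ <;>
    norm_num [h1, hw, hlog]

lemma siv_eq_oneParticleWeight {ψ : Fin 2 × Fin 2 → ℂ} {c : ℕ}
    (hnorm : ∑ p, Complex.normSq (ψ p) = 1) (hc : HasParticleNumber ψ c)
    (hsymm : ψ (0, 1) = ψ (1, 0)) : siv ψ = oneParticleWeight ψ := by
  rw [siv_eq_marginal]
  rcases marginal_one_cases hnorm hc hsymm with ⟨h1, hw⟩ | ⟨h1, hw⟩ | ⟨h1, hw⟩ <;>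
    norm_num [h1, hw]

lemma dotProduct_mulVec_eq_sum_normSq {ι κ : Type*} [Fintype ι] [Fintype κ]
    {ρ : Matrix ι ι ℂ} {q : κ → ℝ} {ψ : κ → ι → ℂ}
    (hρ : ρ = ∑ i, (q i : ℂ) • outer (ψ i)) (v : ι → ℂ) :
    star v ⬝ᵥ ρ *ᵥ v = ((∑ i, q i * Complex.normSq (star v ⬝ᵥ ψ i) : ℝ) : ℂ) := by
  have houter : ∀ x : ι → ℂ, outer x = vecMulVec x (star x) := fun x => rfl
  simp only [hρ, Matrix.sum_mulVec, dotProduct_sum, smul_mulVec, dotProduct_smul, houter,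
    vecMulVec_mulVec, dotProduct_smul]
  push_cast
  refine Finset.sum_congr rfl fun i _ => ?_
  rw [star_dotProduct (ψ i) v, op_smul_eq_mul, smul_eq_mul, Complex.star_def, Complex.mul_conj,
    mul_comm]

namespace IsSSRDecomp

variable {k : ℕ} {q : Fin k → ℝ} {ψ : Fin k → Fin 2 × Fin 2 → ℂ}

lemma rhoSep_sum_mul_normSq (h : IsSSRDecomp rhoSep q ψ) {p : Fin 2 × Fin 2}
    (hp : p = (0, 1) ∨ p = (1, 0)) : ∑ i, q i * Complex.normSq (ψ i p) = 1 / 4 := by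
  have := dotProduct_mulVec_eq_sum_normSq h.2.2.2 (Pi.single p 1)
  rcases hp with rfl | rfl <;>
  · simp [rhoSep, mulVec, dotProduct, Fintype.sum_prod_type, Pi.single_apply] at this
    exact_mod_cast this.symm.trans (by norm_num : (4⁻¹ : ℂ) = ((1 / 4 : ℝ) : ℂ))

lemma rhoSep_sum_mul_normSq_sub (h : IsSSRDecomp rhoSep q ψ) :
    ∑ i, q i * Complex.normSq (ψ i (0, 1) - ψ i (1, 0)) = 0 := by
  have := dotProduct_mulVec_eq_sum_normSq h.2.2.2 (Pi.single (0, 1) 1 - Pi.single (1, 0) 1)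
  simp [rhoSep, mulVec, dotProduct, Fintype.sum_prod_type, Pi.single_apply] at this
  exact_mod_cast this.symm

lemma rhoSep_sum_mul_oneParticleWeight (h : IsSSRDecomp rhoSep q ψ) :
    ∑ i, q i * oneParticleWeight (ψ i) = 1 / 2 := by
  simp only [oneParticleWeight, mul_add, Finset.sum_add_distrib,
    h.rhoSep_sum_mul_normSq (.inl rfl), h.rhoSep_sum_mul_normSq (.inr rfl)]
  norm_num

lemma rhoSep_symm (h : IsSSRDecomp rhoSep q ψ) {i : Fin k} (hi : q i ≠ 0) :
    ψ i (0, 1) = ψ i (1, 0) := by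
  have hterm := (Finset.sum_eq_zero_iff_of_nonneg fun j _ =>
    mul_nonneg (h.1 j) (Complex.normSq_nonneg _)).mp h.rhoSep_sum_mul_normSq_sub i
    (Finset.mem_univ i)
  rw [mul_eq_zero, Complex.normSq_eq_zero, sub_eq_zero] at hterm
  exact hterm.resolve_left hi

lemma rhoSep_sum_eq_half {f : (Fin 2 × Fin 2 → ℂ) → ℝ} (h : IsSSRDecomp rhoSep q ψ)
    (hf : ∀ φ : Fin 2 × Fin 2 → ℂ, ∀ c, ∑ p, Complex.normSq (φ p) = 1 →
      HasParticleNumber φ c → φ (0, 1) = φ (1, 0) → f φ = oneParticleWeight φ) :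
    ∑ i, q i * f (ψ i) = 1 / 2 := by
  rw [← h.rhoSep_sum_mul_oneParticleWeight]
  refine Finset.sum_congr rfl fun i _ => ?_
  rcases eq_or_ne (q i) 0 with hi | hi
  · simp [hi]
  · obtain ⟨c, hc⟩ := h.2.2.1 i
    rw [hf (ψ i) c (h.2.1 i) hc (h.rhoSep_symm hi)]

lemma rhoSep_sum_entE (h : IsSSRDecomp rhoSep q ψ) : ∑ i, q i * entE (ψ i) = 1 / 2 :=
  h.rhoSep_sum_eq_half fun _ _ => entE_eq_oneParticleWeight

lemma rhoSep_sum_siv (h : IsSSRDecomp rhoSep q ψ) : ∑ i, q i * siv (ψ i) = 1 / 2 :=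
  h.rhoSep_sum_eq_half fun _ _ => siv_eq_oneParticleWeight

end IsSSRDecomp

noncomputable def rhoSepStates : Fin 3 → Fin 2 × Fin 2 → ℂ :=
  ![Pi.single (0, 0) 1,
    fun p => if p = (0, 1) ∨ p = (1, 0) then ((Real.sqrt 2 : ℝ) : ℂ)⁻¹ else 0,
    Pi.single (1, 1) 1]

lemma isSSRDecomp_rhoSepStates : IsSSRDecomp rhoSep ![1 / 4, 1 / 2, 1 / 4] rhoSepStates := by
  have hsqrt : ((Real.sqrt 2 : ℝ) : ℂ)⁻¹ * ((Real.sqrt 2 : ℝ) : ℂ)⁻¹ = 1 / 2 := by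
    rw [← mul_inv, ← Complex.ofReal_mul, Real.mul_self_sqrt zero_le_two]
    norm_num
  refine ⟨?_, ?_, ?_, ?_⟩
  · intro i; fin_cases i <;> norm_num
  · intro i
    fin_cases i <;> norm_num [rhoSepStates, Fintype.sum_prod_type, Pi.single_apply]
  · intro i
    fin_cases i
    · exact ⟨0, fun p hp => by fin_cases p <;> simp_all [rhoSepStates]⟩
    · exact ⟨1, fun p hp => by fin_cases p <;> simp_all [rhoSepStates]⟩
    · exact ⟨2, fun p hp => by fin_cases p <;> simp_all [rhoSepStates]⟩
  · ext p r
    fin_cases p <;> fin_cases r <;>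
      simp [rhoSep, Matrix.sum_apply, Fin.sum_univ_three, outer, rhoSepStates, Pi.single_apply,
        Complex.conj_ofReal, hsqrt] <;> norm_num [hsqrt]

/-- Every SSR-compatible pure-state decomposition of `ρ_sep` has average
entanglement at least `1/2` and average SiV at least `1/2`, and both values
are attained: `E_F^SSR(ρ_sep) = 1/2` and `V_F^SSR(ρ_sep) = 1/2`. -/
theorem rhoSep_formation :
    (∀ (k : ℕ) (q : Fin k → ℝ) (ψ : Fin k → Fin 2 × Fin 2 → ℂ),
      IsSSRDecomp rhoSep q ψ →
        (1 / 2 : ℝ) ≤ ∑ i, q i * entE (ψ i) ∧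
        (1 / 2 : ℝ) ≤ ∑ i, q i * siv (ψ i)) ∧
    (∃ (k : ℕ) (q : Fin k → ℝ) (ψ : Fin k → Fin 2 × Fin 2 → ℂ),
      IsSSRDecomp rhoSep q ψ ∧
        ∑ i, q i * entE (ψ i) = (1 / 2 : ℝ) ∧
        ∑ i, q i * siv (ψ i) = (1 / 2 : ℝ)) :=
  ⟨fun _ _ _ h => ⟨h.rhoSep_sum_entE.ge, h.rhoSep_sum_siv.ge⟩,
    ⟨3, _, _, isSSRDecomp_rhoSepStates, isSSRDecomp_rhoSepStates.rhoSep_sum_entE,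
      isSSRDecomp_rhoSepStates.rhoSep_sum_siv⟩⟩
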